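/- (Corollary 3) Let d ≥ 1, s₁, s₂, ω ∈ ℝ, N₀ := d + ω₊ + (1/2)(|s₁+ω| + |s₂+ω|) with ω₊ = max(ω,0), and N ∈ ℕ with N > N₀. Suppose that Θ ∈ BT^{ω,N}(ℤ^d) if ω ≥ 0, and Θ ∈ BT^{2ω,N}(ℤ^d) if ω < 0. Then 𝒯_Θ is a bounded bilinear operator from ℓ^p_{s₁+ω}(ℤ^d) × ℓ^q_{s₂+ω}(ℤ^d) to ℓ^r_{s₁+s₂}(ℤ^d) for any 1 ≤ p, q, r ≤ ∞ with 1/p + 1/q = 1/r. In particular, for every Θ in the class BT^0(ℤ^d) := ∪_{N > d} BT^{0,N}(ℤ^d), the operator 𝒯_Θ is bounded from ℓ^p(ℤ^d) × ℓ^q(ℤ^d) to ℓ^r(ℤ^d) for any such p, q, r. -/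

import Mathlib

open scoped ENNReal NNReal BigOperators

noncomputable section

/-- The integer lattice `ℤ^d`. -/
abbrev Zd (d : ℕ) := Fin d → ℤ

/-- Euclidean norm `|j|` of an integer vector `j ∈ ℤ^d`. -/
def znorm {d : ℕ} (j : Zd d) : ℝ := Real.sqrt (∑ i, ((j i : ℝ)) ^ 2)

/-- Euclidean norm of a real vector. -/
def rnorm {d : ℕ} (x : Fin d → ℝ) : ℝ := Real.sqrt (∑ i, (x i) ^ 2)

/-- Japanese bracket `⟨x⟩ = (1 + x²)^{1/2}`. -/
def jb (x : ℝ) : ℝ := Real.sqrt (1 + x ^ 2)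

/-- The discrete bilinear operator `𝒯_Θ` (named `Tbil` here) associated with an infinite tensor `Θ`:
`(𝒯_Θ(f,g))_j = Σ_k Σ_ℓ Θ(j,k,ℓ) f_k g_ℓ`. -/
def Tbil {d : ℕ} (Θ : Zd d → Zd d → Zd d → ℂ) (f g : Zd d → ℂ) : Zd d → ℂ :=
  fun j => ∑' k, ∑' l, Θ j k l * f k * g l

/-- `ℓ^p`-type norm (extended-real valued) of a family of nonnegative extended reals,
with the usual modification (supremum) when `p = ∞`. -/
def nestNorm {ι : Type*} (p : ℝ≥0∞) (F : ι → ℝ≥0∞) : ℝ≥0∞ :=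
  if p = ∞ then ⨆ i, F i else (∑' i, F i ^ p.toReal) ^ (1 / p.toReal)

/-- The weighted `ℓ^p_s(ℤ^d)` norm `(Σ_k ⟨k⟩^{sp} |f_k|^p)^{1/p}`. -/
def wlpNorm {d : ℕ} (p : ℝ≥0∞) (s : ℝ) (f : Zd d → ℂ) : ℝ≥0∞ :=
  nestNorm p fun k => ENNReal.ofReal (jb (znorm k) ^ s * ‖f k‖)

/-- The `ℓ^p(ℤ^d)` norm. -/
def lpNorm {d : ℕ} (p : ℝ≥0∞) (f : Zd d → ℂ) : ℝ≥0∞ :=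
  nestNorm p fun k => ENNReal.ofReal ‖f k‖

/-- The tensor norm `‖Θ‖_{ω,N} = sup_{j,k,ℓ} |Θ(j,k,ℓ)| ⟨|j−k|+|j−ℓ|⟩^{2N} /
(⟨|j|+|k|⟩^ω ⟨|j|+|ℓ|⟩^ω)`. -/
def tensorNorm {d : ℕ} (ω N : ℝ) (Θ : Zd d → Zd d → Zd d → ℂ) : ℝ≥0∞ :=
  ⨆ j, ⨆ k, ⨆ l, ENNReal.ofReal
    (‖Θ j k l‖ * jb (znorm (j - k) + znorm (j - l)) ^ (2 * N) /
      (jb (znorm j + znorm k) ^ ω * jb (znorm j + znorm l) ^ ω))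

/-- The tensor norm `‖Θ‖_{ω₁,ω₂,N}`. -/
def tensorNorm2 {d : ℕ} (ω₁ ω₂ N : ℝ) (Θ : Zd d → Zd d → Zd d → ℂ) : ℝ≥0∞ :=
  ⨆ j, ⨆ k, ⨆ l, ENNReal.ofReal
    (‖Θ j k l‖ * jb (znorm (j - k) + znorm (j - l)) ^ (2 * N) /
      (jb (znorm j + znorm k) ^ ω₁ * jb (znorm j + znorm l) ^ ω₂))

/-- The tensor norm `‖Θ‖_{0,0,ω,N} = sup_{j,k,ℓ} |Θ(j,k,ℓ)| ⟨|j−k|+|j−ℓ|⟩^{2N} /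
⟨|j|+|k|+|ℓ|⟩^ω`. -/
def tensorNorm00 {d : ℕ} (ω N : ℝ) (Θ : Zd d → Zd d → Zd d → ℂ) : ℝ≥0∞ :=
  ⨆ j, ⨆ k, ⨆ l, ENNReal.ofReal
    (‖Θ j k l‖ * jb (znorm (j - k) + znorm (j - l)) ^ (2 * N) /
      jb (znorm j + znorm k + znorm l) ^ ω)

/-- The first bilinear commutator `[𝒯_Θ, b]₁(f,g) = 𝒯_Θ(bf, g) − b·𝒯_Θ(f,g)`. -/
def comm1 {d : ℕ} (Θ : Zd d → Zd d → Zd d → ℂ) (b f g : Zd d → ℂ) : Zd d → ℂ :=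
  fun j => Tbil Θ (fun k => b k * f k) g j - b j * Tbil Θ f g j

/-- The second bilinear commutator `[𝒯_Θ, b]₂(f,g) = 𝒯_Θ(f, bg) − b·𝒯_Θ(f,g)`. -/
def comm2 {d : ℕ} (Θ : Zd d → Zd d → Zd d → ℂ) (b f g : Zd d → ℂ) : Zd d → ℂ :=
  fun j => Tbil Θ f (fun l => b l * g l) j - b j * Tbil Θ f g j

/-- One-step finite difference in the variables `(j,k)`, with shift `v ∈ ℤ^d`:
`(D2 v Θ)(j,k,ℓ) = Θ(j+v, k+v, ℓ) − Θ(j,k,ℓ)`. -/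
def D2 {d : ℕ} (v : Zd d) (Θ : Zd d → Zd d → Zd d → ℂ) : Zd d → Zd d → Zd d → ℂ :=
  fun j k l => Θ (j + v) (k + v) l - Θ j k l

/-- One-step finite difference in the variables `(j,ℓ)`, with shift `v ∈ ℤ^d`:
`(D3 v Θ)(j,k,ℓ) = Θ(j+v, k, ℓ+v) − Θ(j,k,ℓ)`. -/
def D3 {d : ℕ} (v : Zd d) (Θ : Zd d → Zd d → Zd d → ℂ) : Zd d → Zd d → Zd d → ℂ :=
  fun j k l => Θ (j + v) k (l + v) - Θ j k l

/-- The iterated partial finite difference operator `Δ₂^α` for `α ∈ ℤ^d`: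
in direction `m`, `Δ_{2,m}^t = (Δ₂^{m, sign t})^{|t|}`. -/
def Delta2 {d : ℕ} (α : Zd d) (Θ : Zd d → Zd d → Zd d → ℂ) : Zd d → Zd d → Zd d → ℂ :=
  (List.finRange d).foldr
    (fun m F => (D2 (Pi.single m (Int.sign (α m))))^[(α m).natAbs] ∘ F) id Θ

/-- The iterated partial finite difference operator `Δ₃^β` for `β ∈ ℤ^d`. -/
def Delta3 {d : ℕ} (β : Zd d) (Θ : Zd d → Zd d → Zd d → ℂ) : Zd d → Zd d → Zd d → ℂ :=
  (List.finRange d).foldr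
    (fun m F => (D3 (Pi.single m (Int.sign (β m))))^[(β m).natAbs] ∘ F) id Θ

/-- `|α| = Σ_m |α_m|` for `α ∈ ℤ^d`. -/
def l1norm {d : ℕ} (α : Zd d) : ℝ := ∑ m, |(α m : ℝ)|

/-- The bilinear tensor class `BT^{ω,N}(ℤ^d)`:
`|Δ₂^α Δ₃^β Θ(j,k,ℓ)| ≤ C_{N,α,β} ⟨|j|+|k|+|ℓ|⟩^{ω−|α|−|β|} ⟨|j−k|+|j−ℓ|⟩^{−2N}`. -/
def BT {d : ℕ} (ω : ℝ) (N : ℕ) (Θ : Zd d → Zd d → Zd d → ℂ) : Prop :=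
  ∀ α β : Zd d, ∃ C : ℝ, 0 < C ∧ ∀ j k l : Zd d,
    ‖Delta2 α (Delta3 β Θ) j k l‖ ≤
      C * jb (znorm j + znorm k + znorm l) ^ (ω - l1norm α - l1norm β) *
        jb (znorm (j - k) + znorm (j - l)) ^ (-(2 * (N : ℝ)))

/-- The bilinear tensor class of order zero, `BT^0(ℤ^d) = ∪_{N > d} BT^{0,N}(ℤ^d)`. -/
def BT0 {d : ℕ} (Θ : Zd d → Zd d → Zd d → ℂ) : Prop :=
  ∃ N : ℕ, d < N ∧ BT 0 N Θ

/-- Directional derivative of a function on `ℝ^d × ℝ^d` in the direction `v`. -/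
def pDeriv {d : ℕ} (v : (Fin d → ℝ) × (Fin d → ℝ))
    (F : (Fin d → ℝ) × (Fin d → ℝ) → ℂ) : (Fin d → ℝ) × (Fin d → ℝ) → ℂ :=
  fun p => fderiv ℝ F p v

/-- Iterated partial derivative `∂_x^α` in the first group of variables. -/
def pdx {d : ℕ} (α : Fin d → ℕ) :
    ((Fin d → ℝ) × (Fin d → ℝ) → ℂ) → (Fin d → ℝ) × (Fin d → ℝ) → ℂ :=
  (List.finRange d).foldr (fun m G => (pDeriv (Pi.single m 1, 0))^[α m] ∘ G) id

/-- Iterated partial derivative `∂_y^β` in the second group of variables. -/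
def pdy {d : ℕ} (β : Fin d → ℕ) :
    ((Fin d → ℝ) × (Fin d → ℝ) → ℂ) → (Fin d → ℝ) × (Fin d → ℝ) → ℂ :=
  (List.finRange d).foldr (fun m G => (pDeriv (0, Pi.single m 1))^[β m] ∘ G) id


/-!
With `α = β = 0` the `BT` condition gives `|Θ(j,k,ℓ)| ≲ ⟨j⟩^{2ω} ⟨|j-k|+|j-ℓ|⟩^{2ω₊-2N}`.
Peetre's inequality `⟨x⟩^t ≤ 2^{|t|/2} ⟨y⟩^t ⟨x-y⟩^{|t|}` moves the weight `⟨j⟩^{s₁+s₂+2ω}` onto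
`k` and `ℓ` at the cost of part of the off-diagonal decay, leaving
`⟨j⟩^{s₁+s₂} |Θ(j,k,ℓ)| ≲ ⟨k⟩^{s₁+ω} ⟨ℓ⟩^{s₂+ω} ⟨j-k⟩^{-M} ⟨j-ℓ⟩^{-M}` with
`M = N - ω₊ - (|s₁+ω| + |s₂+ω|)/2 > d`. Hence `⟨j⟩^{s₁+s₂} |𝒯_Θ(f,g)_j|` is at most the product of
the convolutions of the weighted inputs with `⟨·⟩^{-M} ∈ ℓ¹(ℤ^d)`, and Hölder's inequality followed
by Young's inequality bounds its `ℓ^r` norm. The unweighted statement is the case `s₁ = s₂ = ω = 0`.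
-/

lemma jb_pos (x : ℝ) : 0 < jb x := Real.sqrt_pos.mpr (by positivity)

lemma one_le_jb (x : ℝ) : 1 ≤ jb x :=
  Real.one_le_sqrt.mpr (le_add_of_nonneg_right (sq_nonneg x))

lemma jb_rpow_pos (x s : ℝ) : 0 < jb x ^ s := Real.rpow_pos_of_pos (jb_pos x) s

lemma abs_le_jb (x : ℝ) : |x| ≤ jb x := Real.abs_le_sqrt (by linarith)

lemma jb_le_jb {x y : ℝ} (h : |x| ≤ y) : jb x ≤ jb y := by
  have : x ^ 2 ≤ y ^ 2 := by
    rw [← sq_abs x]; exact pow_le_pow_left₀ (abs_nonneg x) h 2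
  exact Real.sqrt_le_sqrt (by linarith)

lemma jb_add_le (x y : ℝ) : jb (x + y) ≤ √2 * jb x * jb y := by
  unfold jb
  rw [← Real.sqrt_mul zero_le_two, ← Real.sqrt_mul (by positivity)]
  exact Real.sqrt_le_sqrt (by nlinarith [sq_nonneg (x - y), sq_nonneg (x * y)])

lemma jb_mul_le {c : ℝ} (hc : 1 ≤ c) (x : ℝ) : jb (c * x) ≤ c * jb x := by
  calc jb (c * x) ≤ √(c ^ 2 * (1 + x ^ 2)) := Real.sqrt_le_sqrt (by nlinarith)
    _ = c * jb x := by rw [Real.sqrt_mul (sq_nonneg c), Real.sqrt_sq (by linarith), jb]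

lemma jb_rpow_le_peetre {a b c : ℝ} (s : ℝ) (ha : 0 ≤ a) (hb : 0 ≤ b) (hab : |a - b| ≤ c) :
    jb a ^ s ≤ √2 ^ |s| * jb c ^ |s| * jb b ^ s := by
  have hc : 0 ≤ c := (abs_nonneg _).trans hab
  have hpos : 0 < √2 * jb c := mul_pos (by positivity) (jb_pos c)
  rw [← Real.mul_rpow (by positivity) (jb_pos c).le]
  rcases le_or_gt 0 s with hs | hs
  · have key : jb a ≤ √2 * jb c * jb b :=
      calc jb a ≤ jb (b + c) := jb_le_jb (by rw [abs_of_nonneg ha]; linarith [le_abs_self (a - b)])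
        _ ≤ √2 * jb c * jb b := by linarith [jb_add_le b c]
    rw [abs_of_nonneg hs, ← Real.mul_rpow hpos.le (jb_pos b).le]
    exact Real.rpow_le_rpow (jb_pos a).le key hs
  · have key : jb b ≤ √2 * jb c * jb a :=
      calc jb b ≤ jb (a + c) := jb_le_jb (by rw [abs_of_nonneg hb]; linarith [neg_abs_le (a - b)])
        _ ≤ √2 * jb c * jb a := by linarith [jb_add_le a c]
    rw [abs_of_neg hs, Real.rpow_neg hpos.le, ← div_eq_inv_mul,
      le_div_iff₀ (Real.rpow_pos_of_pos hpos _), ← Real.mul_rpow (jb_pos a).le hpos.le]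
    exact Real.rpow_le_rpow_of_nonpos (jb_pos b) (by linarith) hs.le

section znorm

variable {d : ℕ}

def Zd.toEuclidean (j : Zd d) : EuclideanSpace ℝ (Fin d) := WithLp.toLp 2 fun i => (j i : ℝ)

lemma znorm_eq_norm (j : Zd d) : znorm j = ‖Zd.toEuclidean j‖ := by
  simp [znorm, Zd.toEuclidean, EuclideanSpace.norm_eq]

lemma Zd.toEuclidean_sub (j k : Zd d) : Zd.toEuclidean (j - k) =
    Zd.toEuclidean j - Zd.toEuclidean k := by
  ext i; simp [Zd.toEuclidean]

lemma znorm_nonneg (j : Zd d) : 0 ≤ znorm j := Real.sqrt_nonneg _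

lemma abs_znorm_sub_znorm_le (j k : Zd d) : |znorm j - znorm k| ≤ znorm (j - k) := by
  simpa only [znorm_eq_norm, Zd.toEuclidean_sub] using abs_norm_sub_norm_le _ _

lemma abs_le_znorm (j : Zd d) (i : Fin d) : |(j i : ℝ)| ≤ znorm j := by
  simpa [znorm_eq_norm, Zd.toEuclidean] using PiLp.norm_apply_le (Zd.toEuclidean j) i

end znorm

lemma jb_rpow_mul_jb_add_rpow_le {t₁ t₂ M J K L a b : ℝ} (hM : 0 ≤ M) (hJ : 0 ≤ J) (hK : 0 ≤ K)
    (hL : 0 ≤ L) (hJK : |J - K| ≤ a) (hJL : |J - L| ≤ b) :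
    jb J ^ (t₁ + t₂) * jb (a + b) ^ (-(2 * M + |t₁| + |t₂|)) ≤
      √2 ^ (|t₁| + |t₂|) * (jb K ^ t₁ * jb L ^ t₂ * (jb a ^ (-M) * jb b ^ (-M))) := by
  have ha : 0 ≤ a := (abs_nonneg _).trans hJK
  have hb : 0 ≤ b := (abs_nonneg _).trans hJL
  have haD : jb a ≤ jb (a + b) := jb_le_jb (by rw [abs_of_nonneg ha]; linarith)
  have hbD : jb b ≤ jb (a + b) := jb_le_jb (by rw [abs_of_nonneg hb]; linarith)
  have hdecay : jb a ^ |t₁| * jb b ^ |t₂| * jb (a + b) ^ (-(2 * M + |t₁| + |t₂|)) ≤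
      jb a ^ (-M) * jb b ^ (-M) :=
    calc jb a ^ |t₁| * jb b ^ |t₂| * jb (a + b) ^ (-(2 * M + |t₁| + |t₂|))
        ≤ jb (a + b) ^ |t₁| * jb (a + b) ^ |t₂| * jb (a + b) ^ (-(2 * M + |t₁| + |t₂|)) := by
          refine mul_le_mul_of_nonneg_right (mul_le_mul ?_ ?_ (jb_rpow_pos _ _).le
            (jb_rpow_pos _ _).le) (jb_rpow_pos _ _).le
          · exact Real.rpow_le_rpow (jb_pos a).le haD (abs_nonneg t₁)
          · exact Real.rpow_le_rpow (jb_pos b).le hbD (abs_nonneg t₂)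
      _ = jb (a + b) ^ (-M) * jb (a + b) ^ (-M) := by
          simp only [← Real.rpow_add (jb_pos _)]; ring_nf
      _ ≤ jb a ^ (-M) * jb b ^ (-M) :=
          mul_le_mul (Real.rpow_le_rpow_of_nonpos (jb_pos a) haD (by linarith))
            (Real.rpow_le_rpow_of_nonpos (jb_pos b) hbD (by linarith))
            (jb_rpow_pos _ _).le (jb_rpow_pos _ _).le
  have hpeetre : jb J ^ t₁ * jb J ^ t₂ ≤
      (√2 ^ |t₁| * jb a ^ |t₁| * jb K ^ t₁) * (√2 ^ |t₂| * jb b ^ |t₂| * jb L ^ t₂) :=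
    mul_le_mul (jb_rpow_le_peetre t₁ hJ hK hJK) (jb_rpow_le_peetre t₂ hJ hL hJL)
      (jb_rpow_pos _ _).le ((jb_rpow_le_peetre t₁ hJ hK hJK).trans' (jb_rpow_pos _ _).le)
  calc jb J ^ (t₁ + t₂) * jb (a + b) ^ (-(2 * M + |t₁| + |t₂|))
      = jb J ^ t₁ * jb J ^ t₂ * jb (a + b) ^ (-(2 * M + |t₁| + |t₂|)) := by
        rw [Real.rpow_add (jb_pos J)]
    _ ≤ (√2 ^ |t₁| * jb a ^ |t₁| * jb K ^ t₁) * (√2 ^ |t₂| * jb b ^ |t₂| * jb L ^ t₂) *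
          jb (a + b) ^ (-(2 * M + |t₁| + |t₂|)) :=
        mul_le_mul_of_nonneg_right hpeetre (jb_rpow_pos _ _).le
    _ = √2 ^ (|t₁| + |t₂|) * (jb K ^ t₁ * jb L ^ t₂ *
          (jb a ^ |t₁| * jb b ^ |t₂| * jb (a + b) ^ (-(2 * M + |t₁| + |t₂|)))) := by
        rw [Real.rpow_add (by positivity)]; ring
    _ ≤ √2 ^ (|t₁| + |t₂|) * (jb K ^ t₁ * jb L ^ t₂ * (jb a ^ (-M) * jb b ^ (-M))) := by
        gcongr
        exact mul_nonneg (jb_rpow_pos _ _).le (jb_rpow_pos _ _).le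

lemma jb_add_add_rpow_le {ω J K L a b : ℝ} (hω : 0 ≤ ω) (hJ : 0 ≤ J) (hK : 0 ≤ K) (hL : 0 ≤ L)
    (hJK : |J - K| ≤ a) (hJL : |J - L| ≤ b) :
    jb (J + K + L) ^ ω ≤ (3 * √2) ^ ω * (jb J ^ (2 * ω) * jb (a + b) ^ (2 * ω)) := by
  have hle : jb (J + K + L) ≤ 3 * √2 * (jb J * jb (a + b)) :=
    calc jb (J + K + L) ≤ jb (3 * (J + (a + b))) := by
          refine jb_le_jb ?_
          rw [abs_of_nonneg (by positivity)]
          linarith [abs_le.mp hJK, abs_le.mp hJL]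
      _ ≤ 3 * jb (J + (a + b)) := jb_mul_le (by norm_num) _
      _ ≤ 3 * (√2 * jb J * jb (a + b)) := by gcongr; exact jb_add_le _ _
      _ = 3 * √2 * (jb J * jb (a + b)) := by ring
  have hpos : 0 < jb J * jb (a + b) := mul_pos (jb_pos _) (jb_pos _)
  have hexp (x : ℝ) : jb x ^ ω ≤ jb x ^ (2 * ω) :=
    Real.rpow_le_rpow_of_exponent_le (one_le_jb x) (by linarith)
  calc jb (J + K + L) ^ ω ≤ (3 * √2 * (jb J * jb (a + b))) ^ ω :=
        Real.rpow_le_rpow (jb_pos _).le hle hω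
    _ = (3 * √2) ^ ω * (jb J ^ ω * jb (a + b) ^ ω) := by
        rw [Real.mul_rpow (by positivity) hpos.le, Real.mul_rpow (jb_pos _).le (jb_pos _).le]
    _ ≤ (3 * √2) ^ ω * (jb J ^ (2 * ω) * jb (a + b) ^ (2 * ω)) :=
        mul_le_mul_of_nonneg_left (mul_le_mul (hexp J) (hexp (a + b)) (jb_rpow_pos _ _).le
          (jb_rpow_pos _ _).le) (by positivity)

section nestNorm

open MeasureTheory

variable {ι κ : Type*}

lemma nestNorm_mono {p : ℝ≥0∞} {F G : ι → ℝ≥0∞} (h : ∀ i, F i ≤ G i) :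
    nestNorm p F ≤ nestNorm p G := by
  unfold nestNorm
  split_ifs
  · exact iSup_mono h
  · gcongr with i
    exact h i

lemma nestNorm_top (F : ι → ℝ≥0∞) : nestNorm ∞ F = ⨆ i, F i := if_pos rfl

lemma nestNorm_zero {p : ℝ≥0∞} (hp : p ≠ 0) : nestNorm p (0 : ι → ℝ≥0∞) = 0 := by
  unfold nestNorm
  split_ifs with hpt
  · simp
  · have ht : 0 < p.toReal := ENNReal.toReal_pos hp hpt
    simp [ENNReal.zero_rpow_of_pos ht, ht]

lemma nestNorm_const_mul {p : ℝ≥0∞} (hp : p ≠ 0) (c : ℝ≥0∞) (F : ι → ℝ≥0∞) :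
    nestNorm p (fun i => c * F i) = c * nestNorm p F := by
  unfold nestNorm
  split_ifs with hpt
  · exact (ENNReal.mul_iSup c F).symm
  · have ht : 0 < p.toReal := ENNReal.toReal_pos hp hpt
    simp_rw [ENNReal.mul_rpow_of_nonneg _ _ ht.le, ENNReal.tsum_mul_left]
    rw [ENNReal.mul_rpow_of_nonneg _ _ (by positivity), ← ENNReal.rpow_mul,
      mul_one_div_cancel ht.ne', ENNReal.rpow_one]

lemma nestNorm_comp_equiv (p : ℝ≥0∞) (e : κ ≃ ι) (F : ι → ℝ≥0∞) :
    nestNorm p (F ∘ e) = nestNorm p F := by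
  unfold nestNorm
  split_ifs
  · exact e.iSup_comp
  · rw [← e.tsum_eq]; rfl

lemma nestNorm_mul_le {p q r : ℝ≥0∞} (hp : p ≠ 0) (hq : q ≠ 0) (hpqr : p⁻¹ + q⁻¹ = r⁻¹)
    (F G : ι → ℝ≥0∞) :
    nestNorm r (fun i => F i * G i) ≤ nestNorm p F * nestNorm q G := by
  by_cases hpt : p = ∞
  · obtain rfl : q = r := by simpa [hpt] using hpqr
    calc nestNorm q (fun i => F i * G i) ≤ nestNorm q (fun i => (⨆ j, F j) * G i) :=
          nestNorm_mono fun i => mul_le_mul_left (le_iSup F i) _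
      _ = nestNorm p F * nestNorm q G := by rw [nestNorm_const_mul hq, hpt, nestNorm_top]
  by_cases hqt : q = ∞
  · obtain rfl : p = r := by simpa [hqt] using hpqr
    calc nestNorm p (fun i => F i * G i) ≤ nestNorm p (fun i => (⨆ j, G j) * F i) :=
          nestNorm_mono fun i => by rw [mul_comm]; exact mul_le_mul_left (le_iSup G i) _
      _ = nestNorm p F * nestNorm q G := by
          rw [nestNorm_const_mul hp, mul_comm, hqt, nestNorm_top]
  have hp' : 0 < p.toReal := ENNReal.toReal_pos hp hpt
  have hq' : 0 < q.toReal := ENNReal.toReal_pos hq hqt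
  have hrt : r ≠ ∞ := by
    rintro rfl
    simp_all
  have hr : r ≠ 0 := by
    rintro rfl
    simp_all
  have hrel : 1 / r.toReal = 1 / p.toReal + 1 / q.toReal := by
    simp only [one_div, ← ENNReal.toReal_inv, ← hpqr]
    exact ENNReal.toReal_add (ENNReal.inv_ne_top.mpr hp) (ENNReal.inv_ne_top.mpr hq)
  have hrp : r.toReal < p.toReal :=
    lt_of_one_div_lt_one_div hp' (by rw [hrel]; exact lt_add_of_pos_right _ (by positivity))
  -- `nestNorm` is the `L^p` norm for the counting measure on the discrete σ-algebra
  let _ : MeasurableSpace ι := ⊤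
  have key := ENNReal.lintegral_Lp_mul_le_Lq_mul_Lr (ENNReal.toReal_pos hr hrt) hrp hrel
    Measure.count (measurable_from_top (f := F)).aemeasurable
    (measurable_from_top (f := G)).aemeasurable
  simpa only [nestNorm, if_neg hpt, if_neg hqt, if_neg hrt, lintegral_count, Pi.mul_apply]
    using key

lemma nestNorm_add_le {p : ℝ≥0∞} (hp : 1 ≤ p) (F G : ι → ℝ≥0∞) :
    nestNorm p (F + G) ≤ nestNorm p F + nestNorm p G := by
  unfold nestNorm
  split_ifs with hpt
  · exact iSup_le fun i => add_le_add (le_iSup F i) (le_iSup G i)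
  · let _ : MeasurableSpace ι := ⊤
    have ht : 1 ≤ p.toReal := by simpa using ENNReal.toReal_mono hpt hp
    simpa only [lintegral_count] using ENNReal.lintegral_Lp_add_le (μ := Measure.count)
      (measurable_from_top (f := F)).aemeasurable (measurable_from_top (f := G)).aemeasurable ht

lemma nestNorm_iSup_of_directed [Countable κ] {p : ℝ≥0∞} (hp : p ≠ 0) {F : κ → ι → ℝ≥0∞}
    (hF : Directed (· ≤ ·) F) : nestNorm p (⨆ s, F s) = ⨆ s, nestNorm p (F s) := by
  unfold nestNorm
  split_ifs with hpt
  · simp only [iSup_apply]; exact iSup_comm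
  · have ht : 0 < p.toReal := ENNReal.toReal_pos hp hpt
    have rpow_iSup (t : ℝ) (ht : 0 < t) (x : κ → ℝ≥0∞) : (⨆ s, x s) ^ t = ⨆ s, x s ^ t :=
      (ENNReal.orderIsoRpow t ht).map_iSup x
    let _ : MeasurableSpace ι := ⊤
    have hdir : Directed (· ≤ ·) fun s j => F s j ^ p.toReal :=
      hF.mono_comp (g := fun G j => G j ^ p.toReal) _
        fun _ _ h j => ENNReal.rpow_le_rpow (h j) ht.le
    have monotone_convergence := lintegral_iSup_directed (μ := Measure.count)
      (fun s => (measurable_from_top (f := fun j => F s j ^ p.toReal)).aemeasurable) hdir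
    simp only [lintegral_count] at monotone_convergence
    simp only [iSup_apply, rpow_iSup _ ht]
    rw [monotone_convergence, rpow_iSup _ (one_div_pos.2 ht)]

lemma nestNorm_tsum_le [Countable κ] {p : ℝ≥0∞} (hp : 1 ≤ p) (G : κ → ι → ℝ≥0∞) :
    nestNorm p (fun j => ∑' m, G m j) ≤ ∑' m, nestNorm p (G m) := by
  have hp0 : p ≠ 0 := (zero_lt_one.trans_le hp).ne'
  have hsup : (fun j => ∑' m, G m j) = ⨆ s : Finset κ, ∑ m ∈ s, G m := by
    ext j
    simp only [ENNReal.tsum_eq_iSup_sum, iSup_apply, Finset.sum_apply]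
  rw [hsup, nestNorm_iSup_of_directed hp0
    (Monotone.directed_le fun s t hst => Finset.sum_le_sum_of_subset hst)]
  exact iSup_le fun s => (Finset.le_sum_of_subadditive (nestNorm p) (nestNorm_zero hp0).le
    (nestNorm_add_le hp) s G).trans (ENNReal.sum_le_tsum s)

lemma nestNorm_conv_le {G : Type*} [AddCommGroup G] [Countable G] {p : ℝ≥0∞} (hp : 1 ≤ p)
    (Φ A : G → ℝ≥0∞) :
    nestNorm p (fun j => ∑' k, Φ (j - k) * A k) ≤ (∑' m, Φ m) * nestNorm p A := by
  have hp0 : p ≠ 0 := (zero_lt_one.trans_le hp).ne'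
  calc nestNorm p (fun j => ∑' k, Φ (j - k) * A k)
      = nestNorm p (fun j => ∑' m, Φ m * A (j - m)) := by
        congr 1; ext j
        rw [← (Equiv.subLeft j).tsum_eq]
        simp
    _ ≤ ∑' m, nestNorm p (fun j => Φ m * A (j - m)) := nestNorm_tsum_le hp _
    _ = ∑' m, Φ m * nestNorm p A := by
        congr 1; ext m
        rw [nestNorm_const_mul hp0]
        exact congrArg _ (nestNorm_comp_equiv p (Equiv.subRight m) A)
    _ = (∑' m, Φ m) * nestNorm p A := ENNReal.tsum_mul_right

end nestNorm

lemma ENNReal.tsum_fin_pi_prod {α : Type*} (Ψ : α → ℝ≥0∞) (d : ℕ) :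
    ∑' m : Fin d → α, ∏ i, Ψ (m i) = (∑' a, Ψ a) ^ d := by
  induction d with
  | zero => simp
  | succ d ih =>
    rw [← (Fin.consEquiv fun _ => α).tsum_eq, ENNReal.tsum_prod', pow_succ', ← ih,
      ← ENNReal.tsum_mul_right]
    simp [Fin.prod_univ_succ, ENNReal.tsum_mul_left]

lemma summable_jb_int_rpow_neg {μ : ℝ} (hμ : 1 < μ) : Summable fun n : ℤ => jb n ^ (-μ) := by
  refine Summable.of_norm_bounded_eventually (Real.summable_abs_int_rpow hμ) ?_
  filter_upwards [Filter.eventually_cofinite_ne 0] with n hn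
  rw [Real.norm_of_nonneg (jb_rpow_pos _ _).le]
  exact Real.rpow_le_rpow_of_nonpos (abs_pos.mpr (Int.cast_ne_zero.mpr hn)) (abs_le_jb _)
    (by linarith)

lemma jb_znorm_rpow_neg_le_prod {d : ℕ} {μ M : ℝ} (hμ : 0 ≤ μ) (hμM : μ * d ≤ M) (m : Zd d) :
    jb (znorm m) ^ (-M) ≤ ∏ i, jb (m i) ^ (-μ) :=
  calc jb (znorm m) ^ (-M) ≤ jb (znorm m) ^ (-(μ * d)) :=
        Real.rpow_le_rpow_of_exponent_le (one_le_jb _) (by linarith)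
    _ = ∏ _i : Fin d, jb (znorm m) ^ (-μ) := by
        rw [Finset.prod_const, Finset.card_univ, Fintype.card_fin, ← Real.rpow_natCast,
          ← Real.rpow_mul (jb_pos _).le, neg_mul]
    _ ≤ ∏ i, jb (m i) ^ (-μ) :=
        Finset.prod_le_prod (fun _ _ => (jb_rpow_pos _ _).le) fun i _ =>
          Real.rpow_le_rpow_of_nonpos (jb_pos _) (jb_le_jb (abs_le_znorm m i)) (by linarith)

def jbDecay {d : ℕ} (M : ℝ) (m : Zd d) : ℝ≥0∞ := ENNReal.ofReal (jb (znorm m) ^ (-M))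

lemma tsum_jbDecay_lt_top {d : ℕ} {M : ℝ} (hM : d < M) : ∑' m : Zd d, jbDecay M m < ∞ := by
  -- any `μ > 1` with `μ * d ≤ M` works; `M / d` is avoided because `d` may be `0`
  set μ := 1 + (M - d) / (d + 1)
  have hμ : 1 < μ := by
    have : 0 < (M - d) / (d + 1) := div_pos (by linarith) (by positivity)
    linarith
  have hμM : μ * d ≤ M := by
    have : (M - d) / (d + 1) * d ≤ M - d := by
      rw [div_mul_eq_mul_div, div_le_iff₀ (by positivity)]
      nlinarith
    linarith
  calc ∑' m : Zd d, jbDecay M m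
      ≤ ∑' m : Zd d, ∏ i, ENNReal.ofReal (jb (m i) ^ (-μ)) := by
        refine ENNReal.tsum_le_tsum fun m => ?_
        rw [← ENNReal.ofReal_prod_of_nonneg fun i _ => (jb_rpow_pos _ _).le]
        exact ENNReal.ofReal_le_ofReal (jb_znorm_rpow_neg_le_prod (by linarith) hμM m)
    _ = (∑' n : ℤ, ENNReal.ofReal (jb n ^ (-μ))) ^ d :=
        ENNReal.tsum_fin_pi_prod (fun n : ℤ => ENNReal.ofReal (jb n ^ (-μ))) d
    _ < ∞ := by
        rw [← ENNReal.ofReal_tsum_of_nonneg (fun n => (jb_rpow_pos _ _).le)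
          (summable_jb_int_rpow_neg hμ)]
        exact ENNReal.pow_lt_top ENNReal.ofReal_lt_top

section kernel

variable {d : ℕ}

def weightedEnorm (t : ℝ) (f : Zd d → ℂ) (k : Zd d) : ℝ≥0∞ :=
  ENNReal.ofReal (jb (znorm k) ^ t) * ‖f k‖ₑ

def KernelBound (s t₁ t₂ M C : ℝ) (Θ : Zd d → Zd d → Zd d → ℂ) : Prop :=
  ∀ j k l, jb (znorm j) ^ s * ‖Θ j k l‖ ≤ C * (jb (znorm k) ^ t₁ * jb (znorm l) ^ t₂ *
    (jb (znorm (j - k)) ^ (-M) * jb (znorm (j - l)) ^ (-M)))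

lemma wlpNorm_eq_nestNorm (p : ℝ≥0∞) (t : ℝ) (f : Zd d → ℂ) :
    wlpNorm p t f = nestNorm p (weightedEnorm t f) := by
  unfold wlpNorm weightedEnorm
  simp only [ENNReal.ofReal_mul (jb_rpow_pos _ _).le, ofReal_norm]

variable {s t₁ t₂ M C : ℝ} {Θ : Zd d → Zd d → Zd d → ℂ}

lemma weightedEnorm_Tbil_le (hC : 0 ≤ C)
    (hΘ : KernelBound s t₁ t₂ M C Θ)
    (f g : Zd d → ℂ) (j : Zd d) :
    weightedEnorm s (Tbil Θ f g) j ≤ ENNReal.ofReal C *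
      ((∑' k, jbDecay M (j - k) * weightedEnorm t₁ f k) *
        (∑' l, jbDecay M (j - l) * weightedEnorm t₂ g l)) := by
  set w := ENNReal.ofReal (jb (znorm j) ^ s)
  have hΘe : ∀ k l, w * ‖Θ j k l‖ₑ ≤
      ENNReal.ofReal C * (jbDecay M (j - k) * ENNReal.ofReal (jb (znorm k) ^ t₁)) *
        (jbDecay M (j - l) * ENNReal.ofReal (jb (znorm l) ^ t₂)) := by
    intro k l
    have h := ENNReal.ofReal_le_ofReal (hΘ j k l)
    simp only [ENNReal.ofReal_mul hC, ENNReal.ofReal_mul (jb_rpow_pos _ _).le, ofReal_norm,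
      ENNReal.ofReal_mul (mul_pos (jb_rpow_pos _ _) (jb_rpow_pos _ _)).le] at h
    calc _ ≤ _ := h
      _ = _ := by simp only [jbDecay]; ring
  calc weightedEnorm s (Tbil Θ f g) j = w * ‖∑' k, ∑' l, Θ j k l * f k * g l‖ₑ := rfl
    _ ≤ w * ∑' k, ∑' l, ‖Θ j k l‖ₑ * ‖f k‖ₑ * ‖g l‖ₑ := by
        gcongr
        refine (enorm_tsum_le_tsum_enorm (f := fun k => ∑' l, Θ j k l * f k * g l)).trans
          (ENNReal.tsum_le_tsum fun k => ?_)
        simpa only [enorm_mul] using enorm_tsum_le_tsum_enorm (f := fun l => Θ j k l * f k * g l)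
    _ = ∑' k, ∑' l, w * ‖Θ j k l‖ₑ * (‖f k‖ₑ * ‖g l‖ₑ) := by
        simp only [← ENNReal.tsum_mul_left, mul_assoc]
    _ ≤ ∑' k, ∑' l, ENNReal.ofReal C * (jbDecay M (j - k) * ENNReal.ofReal (jb (znorm k) ^ t₁)) *
          (jbDecay M (j - l) * ENNReal.ofReal (jb (znorm l) ^ t₂)) * (‖f k‖ₑ * ‖g l‖ₑ) :=
        ENNReal.tsum_le_tsum fun k => ENNReal.tsum_le_tsum fun l => mul_le_mul_left (hΘe k l) _
    _ = ∑' k, ∑' l, (ENNReal.ofReal C * (jbDecay M (j - k) * weightedEnorm t₁ f k)) *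
          (jbDecay M (j - l) * weightedEnorm t₂ g l) := by
        refine tsum_congr fun k => tsum_congr fun l => ?_
        simp only [weightedEnorm]
        ring
    _ = _ := by rw [← mul_assoc]; simp only [ENNReal.tsum_mul_left, ENNReal.tsum_mul_right]

theorem wlpNorm_Tbil_le_of_kernel_le (hC : 0 ≤ C)
    (hΘ : KernelBound s t₁ t₂ M C Θ)
    {p q r : ℝ≥0∞} (hp : 1 ≤ p) (hq : 1 ≤ q) (hpqr : p⁻¹ + q⁻¹ = r⁻¹) (f g : Zd d → ℂ) :
    wlpNorm r s (Tbil Θ f g) ≤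
      ENNReal.ofReal C * (∑' m : Zd d, jbDecay M m) ^ 2 * wlpNorm p t₁ f * wlpNorm q t₂ g := by
  have hp0 : p ≠ 0 := (zero_lt_one.trans_le hp).ne'
  have hq0 : q ≠ 0 := (zero_lt_one.trans_le hq).ne'
  have hr0 : r ≠ 0 := by
    rintro rfl
    simp_all
  simp only [wlpNorm_eq_nestNorm]
  calc nestNorm r (weightedEnorm s (Tbil Θ f g))
      ≤ nestNorm r fun j => ENNReal.ofReal C *
          ((∑' k, jbDecay M (j - k) * weightedEnorm t₁ f k) *
            (∑' l, jbDecay M (j - l) * weightedEnorm t₂ g l)) :=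
        nestNorm_mono (weightedEnorm_Tbil_le hC hΘ f g)
    _ = ENNReal.ofReal C * nestNorm r fun j => (∑' k, jbDecay M (j - k) * weightedEnorm t₁ f k) *
          (∑' l, jbDecay M (j - l) * weightedEnorm t₂ g l) := nestNorm_const_mul hr0 _ _
    _ ≤ ENNReal.ofReal C *
          (nestNorm p (fun j => ∑' k, jbDecay M (j - k) * weightedEnorm t₁ f k) *
            nestNorm q (fun j => ∑' l, jbDecay M (j - l) * weightedEnorm t₂ g l)) := by
        gcongr
        exact nestNorm_mul_le hp0 hq0 hpqr _ _
    _ ≤ ENNReal.ofReal C * (((∑' m, jbDecay M m) * nestNorm p (weightedEnorm t₁ f)) *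
          ((∑' m, jbDecay M m) * nestNorm q (weightedEnorm t₂ g))) := by
        gcongr
        · exact nestNorm_conv_le hp _ _
        · exact nestNorm_conv_le hq _ _
    _ = _ := by ring

lemma KernelBound.of_norm_le (hM : 0 ≤ M) (hC : 0 ≤ C)
    (hΘ : ∀ j k l, ‖Θ j k l‖ ≤ C * (jb (znorm j) ^ (t₁ + t₂ - s) *
      jb (znorm (j - k) + znorm (j - l)) ^ (-(2 * M + |t₁| + |t₂|)))) :
    KernelBound s t₁ t₂ M (C * √2 ^ (|t₁| + |t₂|)) Θ := by
  intro j k l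
  have hw := jb_rpow_mul_jb_add_rpow_le (t₁ := t₁) (t₂ := t₂) hM (znorm_nonneg j)
    (znorm_nonneg k) (znorm_nonneg l) (abs_znorm_sub_znorm_le j k) (abs_znorm_sub_znorm_le j l)
  rw [show t₁ + t₂ = s + (t₁ + t₂ - s) by ring, Real.rpow_add (jb_pos _)] at hw
  calc jb (znorm j) ^ s * ‖Θ j k l‖
      ≤ jb (znorm j) ^ s * (C * (jb (znorm j) ^ (t₁ + t₂ - s) *
          jb (znorm (j - k) + znorm (j - l)) ^ (-(2 * M + |t₁| + |t₂|)))) :=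
        mul_le_mul_of_nonneg_left (hΘ j k l) (jb_rpow_pos _ _).le
    _ = C * (jb (znorm j) ^ s * jb (znorm j) ^ (t₁ + t₂ - s) *
          jb (znorm (j - k) + znorm (j - l)) ^ (-(2 * M + |t₁| + |t₂|))) := by ring
    _ ≤ C * (√2 ^ (|t₁| + |t₂|) * (jb (znorm k) ^ t₁ * jb (znorm l) ^ t₂ *
          (jb (znorm (j - k)) ^ (-M) * jb (znorm (j - l)) ^ (-M)))) :=
        mul_le_mul_of_nonneg_left hw hC
    _ = _ := by ring

end kernel

section BT

variable {d : ℕ}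

lemma Delta2_zero (Θ : Zd d → Zd d → Zd d → ℂ) : Delta2 0 Θ = Θ := by
  simp [Delta2]

lemma Delta3_zero (Θ : Zd d → Zd d → Zd d → ℂ) : Delta3 0 Θ = Θ := by
  simp [Delta3]

lemma BT.norm_le {ω : ℝ} {N : ℕ} {Θ : Zd d → Zd d → Zd d → ℂ} (h : BT ω N Θ) :
    ∃ C, 0 < C ∧ ∀ j k l, ‖Θ j k l‖ ≤ C * jb (znorm j + znorm k + znorm l) ^ ω *
      jb (znorm (j - k) + znorm (j - l)) ^ (-(2 * (N : ℝ))) := by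
  simpa [Delta2_zero, Delta3_zero, l1norm] using h 0 0

lemma exists_norm_le_of_BT {ω : ℝ} {N : ℕ} {Θ : Zd d → Zd d → Zd d → ℂ}
    (hΘ₁ : 0 ≤ ω → BT ω N Θ) (hΘ₂ : ω < 0 → BT (2 * ω) N Θ) :
    ∃ C, 0 < C ∧ ∀ j k l, ‖Θ j k l‖ ≤ C * (jb (znorm j) ^ (2 * ω) *
      jb (znorm (j - k) + znorm (j - l)) ^ (2 * max ω 0 - 2 * N)) := by
  rcases le_or_gt 0 ω with hω | hω
  · obtain ⟨C, hC, h⟩ := (hΘ₁ hω).norm_le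
    refine ⟨C * (3 * √2) ^ ω, by positivity, fun j k l => (h j k l).trans ?_⟩
    have hS := jb_add_add_rpow_le hω (znorm_nonneg j) (znorm_nonneg k) (znorm_nonneg l)
      (abs_znorm_sub_znorm_le j k) (abs_znorm_sub_znorm_le j l)
    rw [max_eq_left hω, show 2 * ω - 2 * (N : ℝ) = 2 * ω + -(2 * N) by ring,
      Real.rpow_add (jb_pos _)]
    calc _ ≤ C * ((3 * √2) ^ ω * (jb (znorm j) ^ (2 * ω) *
            jb (znorm (j - k) + znorm (j - l)) ^ (2 * ω))) *
            jb (znorm (j - k) + znorm (j - l)) ^ (-(2 * (N : ℝ))) := by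
          gcongr
          exact (jb_rpow_pos _ _).le
      _ = _ := by ring
  · obtain ⟨C, hC, h⟩ := (hΘ₂ hω).norm_le
    refine ⟨C, hC, fun j k l => (h j k l).trans ?_⟩
    have hS : jb (znorm j + znorm k + znorm l) ^ (2 * ω) ≤ jb (znorm j) ^ (2 * ω) :=
      Real.rpow_le_rpow_of_nonpos (jb_pos _)
        (jb_le_jb (by
          rw [abs_of_nonneg (znorm_nonneg j)]; linarith [znorm_nonneg k, znorm_nonneg l]))
        (by linarith)
    rw [max_eq_right hω.le, mul_zero, zero_sub, ← mul_assoc]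
    gcongr
    exact (jb_rpow_pos _ _).le

end BT

lemma ENNReal.exists_pos_le_ofReal {K : ℝ≥0∞} (hK : K ≠ ∞) :
    ∃ C : ℝ, 0 < C ∧ K ≤ ENNReal.ofReal C :=
  ⟨K.toReal + 1, by positivity, (ENNReal.ofReal_toReal hK).symm.trans_le
    (ENNReal.ofReal_le_ofReal (le_add_of_nonneg_right zero_le_one))⟩

theorem exists_wlpNorm_Tbil_le_of_BT {d : ℕ} {s₁ s₂ ω : ℝ} {N : ℕ}
    (hN : (N : ℝ) > (d : ℝ) + max ω 0 + (|s₁ + ω| + |s₂ + ω|) / 2)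
    {Θ : Zd d → Zd d → Zd d → ℂ} (hΘ₁ : 0 ≤ ω → BT ω N Θ) (hΘ₂ : ω < 0 → BT (2 * ω) N Θ)
    {p q r : ℝ≥0∞} (hp : 1 ≤ p) (hq : 1 ≤ q) (hpqr : p⁻¹ + q⁻¹ = r⁻¹) :
    ∃ C : ℝ, 0 < C ∧ ∀ f g : Zd d → ℂ, wlpNorm r (s₁ + s₂) (Tbil Θ f g) ≤
      ENNReal.ofReal C * wlpNorm p (s₁ + ω) f * wlpNorm q (s₂ + ω) g := by
  obtain ⟨C, hC, hΘ⟩ := exists_norm_le_of_BT hΘ₁ hΘ₂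
  set M := (N : ℝ) - max ω 0 - (|s₁ + ω| + |s₂ + ω|) / 2 with hM_def
  have hM : (d : ℝ) < M := by rw [hM_def]; linarith
  have hker : KernelBound (s₁ + s₂) (s₁ + ω) (s₂ + ω) M (C * √2 ^ (|s₁ + ω| + |s₂ + ω|)) Θ :=
    KernelBound.of_norm_le (by linarith [(Nat.cast_nonneg d : (0 : ℝ) ≤ d)]) hC.le
      fun j k l => (hΘ j k l).trans_eq (by rw [hM_def]; congr 3 <;> ring)
  have hK : ENNReal.ofReal (C * √2 ^ (|s₁ + ω| + |s₂ + ω|)) * (∑' m : Zd d, jbDecay M m) ^ 2 ≠ ∞ :=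
    ENNReal.mul_ne_top ENNReal.ofReal_ne_top
      (ENNReal.pow_ne_top (tsum_jbDecay_lt_top hM).ne)
  obtain ⟨C', hC', hKC'⟩ := ENNReal.exists_pos_le_ofReal hK
  exact ⟨C', hC', fun f g =>
    (wlpNorm_Tbil_le_of_kernel_le (by positivity) hker hp hq hpqr f g).trans (by gcongr)⟩

lemma wlpNorm_weight_zero {d : ℕ} (p : ℝ≥0∞) (f : Zd d → ℂ) : wlpNorm p 0 f = lpNorm p f := by
  simp [wlpNorm, lpNorm]

theorem stmt_10_general {d : ℕ} (s₁ s₂ ω : ℝ) (N : ℕ)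
    (hN : (N : ℝ) > (d : ℝ) + max ω 0 + (|s₁ + ω| + |s₂ + ω|) / 2)
    (Θ : Zd d → Zd d → Zd d → ℂ)
    (hΘ₁ : 0 ≤ ω → BT ω N Θ) (hΘ₂ : ω < 0 → BT (2 * ω) N Θ)
    (p q r : ℝ≥0∞) (hp : 1 ≤ p) (hq : 1 ≤ q)
    (hpqr : p⁻¹ + q⁻¹ = r⁻¹) :
    (∃ C : ℝ, 0 < C ∧ ∀ f g : Zd d → ℂ,
        wlpNorm r (s₁ + s₂) (Tbil Θ f g) ≤
          ENNReal.ofReal C * wlpNorm p (s₁ + ω) f * wlpNorm q (s₂ + ω) g) ∧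
    (∀ Θ' : Zd d → Zd d → Zd d → ℂ, BT0 Θ' →
      ∃ C : ℝ, 0 < C ∧ ∀ f g : Zd d → ℂ,
        lpNorm r (Tbil Θ' f g) ≤ ENNReal.ofReal C * lpNorm p f * lpNorm q g) := by
  refine ⟨exists_wlpNorm_Tbil_le_of_BT hN hΘ₁ hΘ₂ hp hq hpqr, fun Θ' ⟨N', hN', hΘ'⟩ => ?_⟩
  have h := exists_wlpNorm_Tbil_le_of_BT (s₁ := 0) (s₂ := 0) (ω := 0) (N := N')
    (by simpa using hN') (fun _ => hΘ') (fun h => absurd h (lt_irrefl 0)) hp hq hpqr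
  simpa only [add_zero, wlpNorm_weight_zero] using h

/-- Corollary 3: if `Θ ∈ BT^{ω,N}` (when `ω ≥ 0`) or `Θ ∈ BT^{2ω,N}`
(when `ω < 0`) for some `N ∈ ℕ` with `N > N₀ = d + ω₊ + (|s₁+ω|+|s₂+ω|)/2`, then
`𝒯_Θ : ℓ^p_{s₁+ω} × ℓ^q_{s₂+ω} → ℓ^r_{s₁+s₂}` is bounded; in particular, for every
`Θ′ ∈ BT^0 = ∪_{N>d} BT^{0,N}`, `𝒯_{Θ′} : ℓ^p × ℓ^q → ℓ^r` is bounded. -/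
theorem stmt_10 {d : ℕ} (hd : 1 ≤ d) (s₁ s₂ ω : ℝ) (N : ℕ)
    (hN : (N : ℝ) > (d : ℝ) + max ω 0 + (|s₁ + ω| + |s₂ + ω|) / 2)
    (Θ : Zd d → Zd d → Zd d → ℂ)
    (hΘ₁ : 0 ≤ ω → BT ω N Θ) (hΘ₂ : ω < 0 → BT (2 * ω) N Θ)
    (p q r : ℝ≥0∞) (hp : 1 ≤ p) (hq : 1 ≤ q) (hr : 1 ≤ r)
    (hpqr : p⁻¹ + q⁻¹ = r⁻¹) :
    (∃ C : ℝ, 0 < C ∧ ∀ f g : Zd d → ℂ,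
        wlpNorm r (s₁ + s₂) (Tbil Θ f g) ≤
          ENNReal.ofReal C * wlpNorm p (s₁ + ω) f * wlpNorm q (s₂ + ω) g) ∧
    (∀ Θ' : Zd d → Zd d → Zd d → ℂ, BT0 Θ' →
      ∃ C : ℝ, 0 < C ∧ ∀ f g : Zd d → ℂ,
        lpNorm r (Tbil Θ' f g) ≤ ENNReal.ofReal C * lpNorm p f * lpNorm q g) :=
  stmt_10_general s₁ s₂ ω N hN Θ hΘ₁ hΘ₂ p q r hp hq hpqr

end
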